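/- arXiv:2111.11235 — 4 statements merged into one kernel-verified Lean document; each statement's English description precedes it below -/
import Mathlib

section
/- Let G be a nonabelian group of order p q² where p, q are distinct primes. Then G has a largest nontrivial abelian normal subgroup, i.e., a nontrivial abelian normal subgroup containing every other nontrivial abelian normal subgroup of G. -/
/-!
The largest abelian normal subgroup is `O_p(G) × O_q(G)`, the product of the normal cores of a
Sylow `p`-subgroup and a Sylow `q`-subgroup. Both cores are abelian (they lie in groups of order
`p` and `q²`) and they commute, being normal of coprime orders. An abelian normal subgroup `M`
is the product of its `p`- and `q`-parts; each part is characteristic in `M`, hence a normal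
`p`- resp. `q`-subgroup of `G`, hence contained in the corresponding core. Finally the product
is nontrivial because a group of order `pq²` has a normal Sylow subgroup: if `p < q` the Sylow
count forces a normal Sylow `q`-subgroup; if `q < p` either the Sylow `p`-subgroup is normal or
it is self-normalising, and then Burnside's transfer theorem gives it a normal complement, which
is a Sylow `q`-subgroup.
-/

open Subgroup

section

variable {G : Type*} [Group G]

theorem exists_mul_eq_of_pow_mul_eq_one {x : G} {m n : ℕ} (hmn : m.Coprime n)
    (hx : x ^ (m * n) = 1) :
    ∃ u ∈ zpowers x, ∃ v ∈ zpowers x, u ^ m = 1 ∧ v ^ n = 1 ∧ u * v = x := by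
  obtain ⟨a, b, hab⟩ := Nat.isCoprime_iff_coprime.2 hmn
  have hx' : x ^ ((m : ℤ) * n) = 1 := by exact_mod_cast hx
  refine ⟨x ^ (b * n), zpow_mem_zpowers _ _, x ^ (a * m), zpow_mem_zpowers _ _, ?_, ?_, ?_⟩
  · rw [← zpow_natCast, ← zpow_mul, show b * n * m = m * n * b by ring, zpow_mul, hx',
      one_zpow]
  · rw [← zpow_natCast, ← zpow_mul, show a * m * n = m * n * a by ring, zpow_mul, hx',
      one_zpow]
  · rw [← zpow_add, show b * n + a * m = 1 by linarith, zpow_one]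

theorem Subgroup.isMulCommutative_sup {H K : Subgroup G} [IsMulCommutative H]
    [IsMulCommutative K] (hHK : ∀ x ∈ H, ∀ y ∈ K, Commute x y) :
    IsMulCommutative (H ⊔ K : Subgroup G) := by
  rw [← closure_eq H, ← closure_eq K, ← closure_union]
  refine isMulCommutative_closure ?_
  rintro x (hx | hx) y (hy | hy)
  · exact setLike_mul_comm hx hy
  · exact hHK x hx y hy
  · exact (hHK y hy x hx).symm
  · exact setLike_mul_comm hx hy

theorem IsPGroup.zpowers_of_pow_eq_one {p : ℕ} [Fact p.Prime] {x : G} {k : ℕ}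
    (hx : x ^ p ^ k = 1) : IsPGroup p (zpowers x) := by
  obtain ⟨j, -, hj⟩ := (Nat.dvd_prime_pow Fact.out).1 (orderOf_dvd_of_pow_eq_one hx)
  exact IsPGroup.of_card (by rw [Nat.card_zpowers, hj])

theorem isMulCommutative_normalCore_sup {p q : ℕ} [Fact p.Prime] [Fact q.Prime] (hpq : p ≠ q)
    (P : Sylow p G) (Q : Sylow q G) [IsMulCommutative P] [IsMulCommutative Q] :
    IsMulCommutative
      ((P : Subgroup G).normalCore ⊔ (Q : Subgroup G).normalCore : Subgroup G) := by
  have hcore {H : Subgroup G} [IsMulCommutative H] : IsMulCommutative H.normalCore :=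
    .of_setLike_mul_comm fun a ha b hb => setLike_mul_comm (normalCore_le H ha) (normalCore_le H hb)
  have := hcore (H := P)
  have := hcore (H := Q)
  have hdisj := IsPGroup.disjoint_of_ne p q hpq _ _
    (P.2.to_le (normalCore_le _)) (Q.2.to_le (normalCore_le _))
  exact isMulCommutative_sup fun x hx y hy =>
    commute_of_normal_of_disjoint _ _ inferInstance inferInstance hdisj x y hx hy

end

section

variable {G : Type*} [Group G] [Finite G] {p : ℕ} [Fact p.Prime]

theorem Sylow.card_eq_pow_of_card_eq {a m : ℕ} (hG : Nat.card G = p ^ a * m) (hm : ¬p ∣ m)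
    (P : Sylow p G) : Nat.card P = p ^ a := by
  have hp : p.Prime := Fact.out
  rw [P.card_eq_multiplicity, hG, Nat.factorization_mul (pow_ne_zero a hp.ne_zero)
    (by rintro rfl; exact hm (dvd_zero p)), hp.factorization_pow, Finsupp.add_apply,
    Nat.factorization_eq_zero_of_not_dvd hm]
  simp

theorem card_sylow_eq_one_of_le (h : Nat.card (Sylow p G) ≤ p) : Nat.card (Sylow p G) = 1 := by
  have hp : p.Prime := Fact.out
  have hmod : Nat.card (Sylow p G) % p = 1 := by
    rw [card_sylow_modEq_one p G, Nat.one_mod_eq_one.2 hp.ne_one]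
  rcases h.lt_or_eq with hlt | heq
  · rwa [Nat.mod_eq_of_lt hlt] at hmod
  · rw [heq, Nat.mod_self] at hmod
    exact absurd hmod zero_ne_one

theorem Sylow.normal_of_card_le (P : Sylow p G) (h : Nat.card (Sylow p G) ≤ p) :
    (P : Subgroup G).Normal :=
  have := (Nat.card_eq_one_iff_unique.1 (card_sylow_eq_one_of_le h)).1
  P.normal_of_subsingleton

theorem Sylow.exists_normal_isComplement' (P : Sylow p G) [IsMulCommutative P]
    (h : Nat.card (Sylow p G) = (P : Subgroup G).index) :
    ∃ K : Subgroup G, K.Normal ∧ IsComplement' K P := by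
  have hN : normalizer (P : Set G) = P := by
    refine (le_normalizer.eq_of_not_lt fun hlt => ?_).symm
    exact (index_strictAnti hlt).ne (P.card_eq_index_normalizer ▸ h)
  have hP : normalizer (P : Set G) ≤ centralizer (P : Set G) :=
    hN ▸ le_centralizer (P : Subgroup G)
  exact ⟨_, inferInstance, MonoidHom.ker_transferSylow_isComplement' P hP⟩

theorem mem_normalCore_sylow_of_pow_eq_one {M : Subgroup G} [M.Normal] [IsMulCommutative M]
    (P : Sylow p G) {x : G} (hxM : x ∈ M) {k : ℕ} (hx : x ^ p ^ k = 1) :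
    x ∈ (P : Subgroup G).normalCore := by
  obtain ⟨S⟩ : Nonempty (Sylow p M) := inferInstance
  have := S.characteristic_of_normal inferInstance
  have hxS : (⟨x, hxM⟩ : M) ∈ S :=
    (IsPGroup.zpowers_of_pow_eq_one (Subtype.ext hx)).le_sylow_of_normal S (mem_zpowers _)
  exact normal_le_normalCore.2 ((S.2.map M.subtype).le_sylow_of_normal P) ⟨_, hxS, rfl⟩

end

section

variable {G : Type*} [Group G] [Finite G] {p q : ℕ} [Fact p.Prime] [Fact q.Prime]

theorem le_normalCore_sup_normalCore (hpq : p ≠ q) {a b : ℕ}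
    (hG : Nat.card G = p ^ a * q ^ b) (P : Sylow p G) (Q : Sylow q G) (M : Subgroup G)
    [M.Normal] [IsMulCommutative M] :
    M ≤ (P : Subgroup G).normalCore ⊔ (Q : Subgroup G).normalCore := by
  intro x hx
  have hcop : (p ^ a).Coprime (q ^ b) :=
    ((Nat.coprime_primes Fact.out Fact.out).2 hpq).pow a b
  obtain ⟨u, hu, v, hv, hup, hvq, huv⟩ :=
    exists_mul_eq_of_pow_mul_eq_one hcop (hG ▸ pow_card_eq_one' : x ^ (p ^ a * q ^ b) = 1)
  have hxM : zpowers x ≤ M := zpowers_le.2 hx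
  rw [← huv]
  exact mul_mem (mem_sup_left (mem_normalCore_sylow_of_pow_eq_one P (hxM hu) hup))
    (mem_sup_right (mem_normalCore_sylow_of_pow_eq_one Q (hxM hv) hvq))

theorem Sylow.card_eq_of_card_eq_mul_sq (hpq : p ≠ q) (hG : Nat.card G = p * q ^ 2)
    (P : Sylow p G) : Nat.card P = p := by
  have hq : ¬p ∣ q ^ 2 := fun h =>
    hpq ((Nat.prime_dvd_prime_iff_eq Fact.out Fact.out).1 (Nat.Prime.dvd_of_dvd_pow Fact.out h))
  simpa using P.card_eq_pow_of_card_eq (a := 1) (by rw [hG, pow_one]) hq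

theorem Sylow.card_eq_sq_of_card_eq_mul_sq (hpq : p ≠ q) (hG : Nat.card G = p * q ^ 2)
    (Q : Sylow q G) : Nat.card Q = q ^ 2 :=
  Q.card_eq_pow_of_card_eq (by rw [hG, mul_comm])
    fun h => hpq ((Nat.prime_dvd_prime_iff_eq Fact.out Fact.out).1 h).symm

theorem exists_normal_sylow_of_card_eq_mul_sq (hpq : p ≠ q) (hG : Nat.card G = p * q ^ 2) :
    (∃ P : Sylow p G, (P : Subgroup G).Normal) ∨
      ∃ Q : Sylow q G, (Q : Subgroup G).Normal := by
  have hp : p.Prime := Fact.out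
  have hq : q.Prime := Fact.out
  obtain ⟨P⟩ : Nonempty (Sylow p G) := inferInstance
  obtain ⟨Q⟩ : Nonempty (Sylow q G) := inferInstance
  have hPcard := P.card_eq_of_card_eq_mul_sq hpq hG
  have hQcard := Q.card_eq_sq_of_card_eq_mul_sq hpq hG
  have hPidx : (P : Subgroup G).index = q ^ 2 := by
    have := P.1.card_mul_index
    rw [hPcard, hG] at this
    exact Nat.eq_of_mul_eq_mul_left hp.pos this
  have hQidx : (Q : Subgroup G).index = p := by
    have := Q.1.card_mul_index
    rw [hQcard, hG, mul_comm p] at this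
    exact Nat.eq_of_mul_eq_mul_left (pow_pos hq.pos 2) this
  rcases hpq.lt_or_gt with hlt | hgt
  · exact .inr ⟨Q, Q.normal_of_card_le
      ((Nat.le_of_dvd hp.pos (hQidx ▸ Q.card_dvd_index)).trans hlt.le)⟩
  obtain ⟨i, hi, hnp⟩ := (Nat.dvd_prime_pow hq).1 (hPidx ▸ P.card_dvd_index)
  interval_cases i
  · exact .inl ⟨P, P.normal_of_card_le (by rw [hnp, pow_zero]; exact hp.one_le)⟩
  · have := card_sylow_eq_one_of_le (hnp.trans_le (by rw [pow_one]; exact hgt.le))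
    rw [hnp, pow_one] at this
    exact absurd this hq.ne_one
  · have := isCyclic_of_prime_card hPcard
    obtain ⟨K, hK, hKP⟩ := P.exists_normal_isComplement' (hnp.trans hPidx.symm)
    have hKcard : Nat.card K = q ^ (Nat.card G).factorization q :=
      (hKP.index_eq_card.symm.trans hPidx).trans (hQcard.symm.trans Q.card_eq_multiplicity)
    exact .inr ⟨.ofCard K hKcard, by rwa [Sylow.coe_ofCard]⟩

theorem normalCore_sup_normalCore_ne_bot (hpq : p ≠ q) (hG : Nat.card G = p * q ^ 2)
    (P : Sylow p G) (Q : Sylow q G) :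
    (P : Subgroup G).normalCore ⊔ (Q : Subgroup G).normalCore ≠ ⊥ := by
  rcases exists_normal_sylow_of_card_eq_mul_sq hpq hG with ⟨P', hP'⟩ | ⟨Q', hQ'⟩
  · exact ne_bot_of_le_ne_bot (P'.ne_bot_of_dvd_card (hG ▸ dvd_mul_right p _))
      (le_sup_of_le_left (normal_le_normalCore.2 (P'.2.le_sylow_of_normal P)))
  · exact ne_bot_of_le_ne_bot
      (Q'.ne_bot_of_dvd_card (hG ▸ (dvd_pow_self q two_ne_zero).mul_left p))
      (le_sup_of_le_right (normal_le_normalCore.2 (Q'.2.le_sylow_of_normal Q)))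

end

theorem stmt_9_general (p q : ℕ) (hp : p.Prime) (hq : q.Prime) (hpq : p ≠ q)
    (G : Type*) [Group G] [Fintype G] (hcard : Fintype.card G = p * q ^ 2) :
    ∃ N : Subgroup G, N.Normal ∧ N ≠ ⊥ ∧ (∀ x ∈ N, ∀ y ∈ N, x * y = y * x) ∧
      ∀ M : Subgroup G, M.Normal → M ≠ ⊥ → (∀ x ∈ M, ∀ y ∈ M, x * y = y * x) → M ≤ N := by
  have := Fact.mk hp
  have := Fact.mk hq
  have hG : Nat.card G = p * q ^ 2 := Nat.card_eq_fintype_card.trans hcard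
  obtain ⟨P⟩ : Nonempty (Sylow p G) := inferInstance
  obtain ⟨Q⟩ : Nonempty (Sylow q G) := inferInstance
  have := isCyclic_of_prime_card (P.card_eq_of_card_eq_mul_sq hpq hG)
  have := IsPGroup.isMulCommutative_of_card_eq_prime_sq (Q.card_eq_sq_of_card_eq_mul_sq hpq hG)
  have := isMulCommutative_normalCore_sup hpq P Q
  refine ⟨_, inferInstance, normalCore_sup_normalCore_ne_bot hpq hG P Q,
    fun x hx y hy => setLike_mul_comm hx hy, fun M _ _ hM => ?_⟩
  have : IsMulCommutative M := .of_setLike_mul_comm hM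
  exact le_normalCore_sup_normalCore hpq (a := 1) (by rwa [pow_one]) P Q M

/-- Let `G` be a nonabelian group of order `p q²` where `p, q` are distinct primes. Then
`G` has a largest nontrivial abelian normal subgroup, i.e. a nontrivial abelian normal
subgroup containing every other nontrivial abelian normal subgroup of `G`. -/
theorem stmt_9 (p q : ℕ) (hp : p.Prime) (hq : q.Prime) (hpq : p ≠ q)
    (G : Type*) [Group G] [Fintype G] (hcard : Fintype.card G = p * q ^ 2)
    (hnab : ∃ x y : G, x * y ≠ y * x) :
    ∃ N : Subgroup G, N.Normal ∧ N ≠ ⊥ ∧ (∀ x ∈ N, ∀ y ∈ N, x * y = y * x) ∧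
      ∀ M : Subgroup G, M.Normal → M ≠ ⊥ → (∀ x ∈ M, ∀ y ∈ M, x * y = y * x) → M ≤ N :=
  stmt_9_general p q hp hq hpq G hcard
end

section
/- Let p, q be primes with p ≡ 1 (mod q), let G = Z_p ⋊ Z_q = ⟨a, b | a^p = b^q = 1, b a b⁻¹ = a^t⟩ where t has order q mod p, and let F = ⟨g⟩ ≅ Z_q. Define the action a ◁ g^i = a^{t^i}, b ◁ g^i = b. Define for λ ∈ k with λ^q = 1 the pairing ⟨e_h g^i, e_k g^j⟩ = δ_{h, b^j} δ_{k, b^{-i}} λ^{ij} on the bicrossed product Hopf algebra A_0 = k^G #_{σ,τ} kF with trivial σ, τ. Then this pairing satisfies the multiplicativity axiom ⟨x y, z⟩ = ⟨x, z_{(1)}⟩ ⟨y, z_{(2)}⟩ of a coquasitriangular structure, where multiplication is (e_h g^i)(e_k g^j) = δ_{h◁g^i, k} e_h g^{i+j} and comultiplication is Δ(e_h g^i) = Σ_{h'h''=h} e_{h'} g^i ⊗ e_{h''} g^i. -/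
/-- On `A_0 = k^G #_{σ,τ} k Z_q` with `G = Z_p ⋊ Z_q = ⟨a,b⟩`, trivial `σ, τ`, and action
`h ◁ g^i = b^i h b^{-i}` (i.e. `a ◁ g^i = a^{t^i}`, `b ◁ g^i = b`), the pairing
`⟨e_h g^i, e_k g^j⟩ = δ_{h,b^j} δ_{k,b^{-i}} λ^{ij}` (with `λ^q = 1`) satisfies the
multiplicativity axiom `⟨xy, z⟩ = ⟨x, z₁⟩⟨y, z₂⟩` of a coquasitriangular structure:
`δ_{h◁g^i,k} ⟨e_h g^{i+j}, e_r g^m⟩ = Σ_{cd=r} ⟨e_h g^i, e_c g^m⟩ ⟨e_k g^j, e_d g^m⟩`. -/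
theorem stmt_14 (k : Type*) [Field k] [IsAlgClosed k] [CharZero k]
    (p q t : ℕ) (hp : p.Prime) (hq : q.Prime) (hpq : p ≡ 1 [MOD q])
    (ht : t ^ q ≡ 1 [MOD p]) (ht1 : ¬ t ≡ 1 [MOD p])
    (G : Type*) [Group G] [Fintype G] [DecidableEq G]
    (hcard : Fintype.card G = p * q)
    (a b : G) (ha : a ^ p = 1) (hb : b ^ q = 1) (hrel : b * a * b⁻¹ = a ^ t)
    (Λ : k) (hΛ : Λ ^ q = 1)
    (pair : G → ℕ → G → ℕ → k)
    (hpair : ∀ (h : G) (i : ℕ) (k' : G) (j : ℕ),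
      pair h i k' j
        = (if h = b ^ j then (1 : k) else 0) * (if k' = (b ^ i)⁻¹ then 1 else 0) * Λ ^ (i * j)) :
    ∀ (h k' r : G) (i j m : ℕ),
      (if b ^ i * h * (b ^ i)⁻¹ = k' then (1 : k) else 0) * pair h (i + j) r m
        = ∑ c : G, pair h i c m * pair k' j (c⁻¹ * r) m := by
  intro h k' r i j m
  simp only [hpair]
  rw [Finset.sum_eq_single ((b ^ i)⁻¹)]
  · have hact : b ^ i * b ^ m * (b ^ i)⁻¹ = b ^ m := by
      rw [← pow_add, Nat.add_comm, pow_add, mul_inv_cancel_right]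
    have hinv : (b ^ i)⁻¹⁻¹ * r = b ^ i * r := by simp
    have hpow : Λ ^ ((i + j) * m) = Λ ^ (i * m) * Λ ^ (j * m) := by
      rw [← pow_add, Nat.add_mul]
    have hr : (r = (b ^ (i + j))⁻¹) ↔ (b ^ i * r = (b ^ j)⁻¹) := by
      constructor
      · rintro rfl
        rw [pow_add]
        group
      · intro hx
        have hrr : r = (b ^ i)⁻¹ * (b ^ j)⁻¹ := by
          rw [← hx]; group
        rw [hrr, pow_add, mul_inv_rev]
        exact (((Commute.refl b).pow_pow i j).inv_inv).eq
    by_cases hh : h = b ^ m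
    · subst hh
      rw [hact, hinv, hpow, if_pos rfl, if_pos rfl]
      by_cases hk : k' = b ^ m
      · by_cases hrr : b ^ i * r = (b ^ j)⁻¹
        · rw [if_pos hk.symm, if_pos hk, if_pos (hr.mpr hrr), if_pos hrr]; ring
        · rw [if_neg hrr, if_neg (fun hx => hrr (hr.mp hx))]; ring
      · rw [if_neg (fun hx => hk hx.symm), if_neg hk]; ring
    · simp [hh]
  · intro c _ hc
    simp [hc]
  · intro hmem
    exact absurd (Finset.mem_univ _) hmem
end

section
/- With the same setup as the coquasitriangular structure on A_0 (pairing ⟨e_h g^i, e_k g^j⟩ = δ_{h,b^j} δ_{k,b^{-i}} λ^{ij}, λ^q = 1), the pairing satisfies the commutation relation ⟨x_{(1)}, y_{(1)}⟩ x_{(2)} y_{(2)} = y_{(1)} x_{(1)} ⟨x_{(2)}, y_{(2)}⟩ for all basis elements x = e_h g^i, y = e_k g^j. Concretely: Σ_{rs=h, cd=k} ⟨e_r g^i, e_c g^j⟩ (e_s g^i)(e_d g^j) = Σ_{rs=h, cd=k} (e_c g^j)(e_r g^i) ⟨e_s g^i, e_d g^j⟩, and both sides equal λ^{ij} δ_{b^{-j}h,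 k b^i} e_{b^{-j}h} g^{i+j}. -/
/-- With the coquasitriangular pairing `⟨e_h g^i, e_k g^j⟩ = δ_{h,b^j} δ_{k,b^{-i}} λ^{ij}`
(`λ^q = 1`) on `A_0` (multiplication `(e_h g^i)(e_k g^j) = δ_{h◁g^i,k} e_h g^{i+j}` with
`h ◁ g^i = b^i h b^{-i}`, comultiplication `Δ(e_h g^i) = Σ_{rs=h} e_r g^i ⊗ e_s g^i`), the
commutation relation `⟨x₁,y₁⟩ x₂ y₂ = y₁ x₁ ⟨x₂,y₂⟩` holds on basis elements
`x = e_h g^i, y = e_k g^j`, and both sides equal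
`λ^{ij} δ_{b^{-j}h, k b^i} e_{b^{-j}h} g^{i+j}`. -/
theorem stmt_15 (k : Type*) [Field k] [IsAlgClosed k] [CharZero k]
    (p q t : ℕ) (hp : p.Prime) (hq : q.Prime) (hpq : p ≡ 1 [MOD q])
    (ht : t ^ q ≡ 1 [MOD p]) (ht1 : ¬ t ≡ 1 [MOD p])
    (G : Type*) [Group G] [Fintype G] [DecidableEq G]
    (hcard : Fintype.card G = p * q)
    (a b : G) (ha : a ^ p = 1) (hb : b ^ q = 1) (hrel : b * a * b⁻¹ = a ^ t)
    (Λ : k) (hΛ : Λ ^ q = 1)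
    (pair : G → ℕ → G → ℕ → k)
    (hpair : ∀ (h : G) (i : ℕ) (k' : G) (j : ℕ),
      pair h i k' j
        = (if h = b ^ j then (1 : k) else 0) * (if k' = (b ^ i)⁻¹ then 1 else 0) * Λ ^ (i * j))
    (E : G → ℕ → (G × ℕ → k))
    (hE : ∀ (h : G) (i : ℕ), E h i = fun z => if z = (h, i) then 1 else 0)
    (mulB : G → ℕ → G → ℕ → (G × ℕ → k))
    (hmulB : ∀ (h : G) (i : ℕ) (k' : G) (j : ℕ),
      mulB h i k' j = if b ^ i * h * (b ^ i)⁻¹ = k' then E h (i + j) else 0) :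
    ∀ (h k' : G) (i j : ℕ),
      (∑ r : G, ∑ c : G, pair r i c j • mulB (r⁻¹ * h) i (c⁻¹ * k') j)
          = (∑ r : G, ∑ c : G, pair (r⁻¹ * h) i (c⁻¹ * k') j • mulB c j r i) ∧
      (∑ r : G, ∑ c : G, pair r i c j • mulB (r⁻¹ * h) i (c⁻¹ * k') j)
          = Λ ^ (i * j) • (if (b ^ j)⁻¹ * h = k' * b ^ i
              then E ((b ^ j)⁻¹ * h) (i + j) else 0) := by

  intro h k' i j
  have L : (∑ r : G, ∑ c : G, pair r i c j • mulB (r⁻¹ * h) i (c⁻¹ * k') j)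
      = Λ ^ (i * j) • mulB ((b ^ j)⁻¹ * h) i (b ^ i * k') j := by
    rw [Finset.sum_eq_single (b ^ j)]
    · rw [Finset.sum_eq_single ((b ^ i)⁻¹)]
      · simp [hpair]
      · intro c _ hc; simp [hpair, hc]
      · simp
    · intro r _ hr; apply Finset.sum_eq_zero; intro c _; simp [hpair, hr]
    · simp
  have R : (∑ r : G, ∑ c : G, pair (r⁻¹ * h) i (c⁻¹ * k') j • mulB c j r i)
      = Λ ^ (i * j) • mulB (k' * b ^ i) j (h * (b ^ j)⁻¹) i := by
    rw [Finset.sum_eq_single (h * (b ^ j)⁻¹)]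
    · rw [Finset.sum_eq_single (k' * b ^ i)]
      · have e1 : (h * (b ^ j)⁻¹)⁻¹ * h = b ^ j := by group
        have e2 : (k' * b ^ i)⁻¹ * k' = (b ^ i)⁻¹ := by group
        simp [hpair, e1, e2]
      · intro c _ hc
        have : c⁻¹ * k' ≠ (b ^ i)⁻¹ := by
          intro e; apply hc
          have : c⁻¹ = (b ^ i)⁻¹ * k'⁻¹ := by
            rw [← e]; group
          rw [← inv_inv c, this]; group
        simp [hpair, this]
      · simp
    · intro r _ hr
      apply Finset.sum_eq_zero; intro c _
      have : r⁻¹ * h ≠ b ^ j := by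
        intro e; apply hr
        have : r⁻¹ = b ^ j * h⁻¹ := by rw [← e]; group
        rw [← inv_inv r, this]; group
      simp [hpair, this]
    · simp
  have h1 : (b ^ i * ((b ^ j)⁻¹ * h) * (b ^ i)⁻¹ = b ^ i * k')
      ↔ ((b ^ j)⁻¹ * h = k' * b ^ i) := by
    rw [mul_assoc, mul_right_inj, mul_inv_eq_iff_eq_mul]
  have h2 : (b ^ j * (k' * b ^ i) * (b ^ j)⁻¹ = h * (b ^ j)⁻¹)
      ↔ ((b ^ j)⁻¹ * h = k' * b ^ i) := by
    rw [mul_left_inj]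
    constructor
    · intro e; rw [← e]; group
    · intro e; rw [← e]; group
  have key : mulB ((b ^ j)⁻¹ * h) i (b ^ i * k') j
      = (if (b ^ j)⁻¹ * h = k' * b ^ i then E ((b ^ j)⁻¹ * h) (i + j) else 0) := by
    rw [hmulB, if_congr h1 rfl rfl]
  have key2 : mulB (k' * b ^ i) j (h * (b ^ j)⁻¹) i
      = (if (b ^ j)⁻¹ * h = k' * b ^ i then E ((b ^ j)⁻¹ * h) (i + j) else 0) := by
    rw [hmulB, if_congr h2 rfl rfl]
    by_cases d : (b ^ j)⁻¹ * h = k' * b ^ i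
    · rw [if_pos d, if_pos d, d, Nat.add_comm]
    · rw [if_neg d, if_neg d]
  constructor
  · rw [L, R, key, key2]
  · rw [L, key]
end

section
/- Let q ≡ 1 (mod p) for primes p, q, m of order p modulo q, λ an integer. In the Hopf algebra B_λ* with basis {e_{g^i} a^k b^l} where g has order p and a, b order q, with relations determined by g^i ▷ a = a^{m^i}, g^i ▷ b = b^{m^{λi}} and 2-cocycle σ(g^n, a^i b^j, a^k b^l) = ζ_n^{jk m^{(λ+1)n}}: if λ ≠ 0 mod p, then for every bicharacter w on the group of grouplikes G(B_λ*) ≅ Z_p, the element R = Σ_{r,s} w(r,s) e_r ⊗ e_s fails the relation Δ^op(a) R = R Δ(a), where Δ(a) = Σ_{r,s ∈ Z_p} e_r (s ▷ a) ⊗ e_s a. -/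
/-- In the Hopf algebra `B_λ* = k^(Z_p) #_{σ,τ} k(Z_q × Z_q)` (Example 2.1.7), realized on
the basis `{e_{g^i} a^s b^t}` indexed by `Z_p × (Z_q × Z_q)`, with multiplication
`(XY)(i,f) = Σ_{f₁+f₂=f} X(i,f₁) Y(i,f₂) σ(g^i,f₁,f₂)` where
`σ(g^n, a^i b^j, a^k b^l) = ζ^(c_n(m^(λ+1)) j k m^((λ+1)n))`: if `p ∤ λ`, then for every
bicharacter `w` on the grouplikes `{e_{g^i}} ≅ Z_p`, the element
`R = Σ w(r,s) e_r ⊗ e_s` fails the relation `Δᵒᵖ(a) R = R Δ(a)`, where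
`Δ(a) = Σ_{i',i''} e_{g^{i'}} a^{m^{i''}} ⊗ e_{g^{i''}} a`. -/
theorem stmt_17 (k : Type*) [Field k] [IsAlgClosed k] [CharZero k]
    (p q m lam : ℕ) [NeZero p] [NeZero q] (hp : p.Prime) (hq : q.Prime)
    (hqp : q ≡ 1 [MOD p]) (hm : m ^ p ≡ 1 [MOD q]) (hm1 : ¬ m ≡ 1 [MOD q])
    (hlam : ¬ p ∣ lam)
    (ζ : k) (hζ : IsPrimitiveRoot ζ q)
    (c : ℕ → ℕ → ℕ) (hc : ∀ n r, c n r = ∑ s ∈ Finset.range n, r ^ s)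
    (σ : ZMod p → ZMod q × ZMod q → ZMod q × ZMod q → k)
    (hσ : ∀ (n : ZMod p) (f f' : ZMod q × ZMod q),
      σ n f f' = ζ ^ (c n.val (m ^ (lam + 1)) * f.2.val * f'.1.val * m ^ ((lam + 1) * n.val)))
    (w : ZMod p → ZMod p → kˣ)
    (hw1 : ∀ x y z : ZMod p, w (x + y) z = w x z * w y z)
    (hw2 : ∀ x y z : ZMod p, w x (y + z) = w x y * w x z)
    (mulT : ((ZMod p × (ZMod q × ZMod q)) × (ZMod p × (ZMod q × ZMod q)) → k) →
      ((ZMod p × (ZMod q × ZMod q)) × (ZMod p × (ZMod q × ZMod q)) → k) →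
      ((ZMod p × (ZMod q × ZMod q)) × (ZMod p × (ZMod q × ZMod q)) → k))
    (hmulT : ∀ X Y z, mulT X Y z
      = ∑ f₁ : ZMod q × ZMod q, ∑ f₂ : ZMod q × ZMod q,
          X ((z.1.1, f₁), (z.2.1, f₂)) * Y ((z.1.1, z.1.2 - f₁), (z.2.1, z.2.2 - f₂)) *
            σ z.1.1 f₁ (z.1.2 - f₁) * σ z.2.1 f₂ (z.2.2 - f₂))
    (ΔA ΔopA R : (ZMod p × (ZMod q × ZMod q)) × (ZMod p × (ZMod q × ZMod q)) → k)
    (hΔA : ∀ z, ΔA z = if z.1.2 = ((m : ZMod q) ^ (z.2.1).val, 0) ∧ z.2.2 = (1, 0)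
      then 1 else 0)
    (hΔopA : ∀ z, ΔopA z = ΔA (z.2, z.1))
    (hR : ∀ z, R z = if z.1.2 = 0 ∧ z.2.2 = 0 then (w z.1.1 z.2.1 : k) else 0) :
    mulT ΔopA R ≠ mulT R ΔA := by
  have hp2 : Fact (1 < p) := ⟨hp.one_lt⟩
  have hq2 : Fact (1 < q) := ⟨hq.one_lt⟩
  have hval1 : (1 : ZMod p).val = 1 := ZMod.val_one p
  have hmq : ((m : ZMod q)) ≠ 1 := by
    intro h
    exact hm1 ((ZMod.natCast_eq_natCast_iff m 1 q).mp (by simpa using h))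
  intro h
  have key := congrFun h ((1, ((1:ZMod q), 0)), (1, ((m:ZMod q), 0)))
  rw [hmulT, hmulT] at key
  have hσ0 : ∀ (n : ZMod p) (f : ZMod q × ZMod q) (x : ZMod q), σ n (x, 0) f = 1 := by
    intro n f x
    rw [hσ]; simp
  have hσ0' : ∀ (n : ZMod p) (f : ZMod q × ZMod q), σ n f 0 = 1 := by
    intro n f
    rw [hσ]; simp
  have hL : (∑ f₁ : ZMod q × ZMod q, ∑ f₂ : ZMod q × ZMod q,
      ΔopA ((((1:ZMod p), ((1:ZMod q), (0:ZMod q))).1, f₁), (((1:ZMod p), ((m:ZMod q), (0:ZMod q))).1, f₂)) *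
        R ((((1:ZMod p), ((1:ZMod q), (0:ZMod q))).1, (((1:ZMod p), ((1:ZMod q), (0:ZMod q))).2) - f₁),
           (((1:ZMod p), ((m:ZMod q), (0:ZMod q))).1, (((1:ZMod p), ((m:ZMod q), (0:ZMod q))).2) - f₂)) *
        σ (((1:ZMod p), ((1:ZMod q), (0:ZMod q))).1) f₁ ((((1:ZMod p), ((1:ZMod q), (0:ZMod q))).2) - f₁) *
        σ (((1:ZMod p), ((m:ZMod q), (0:ZMod q))).1) f₂ ((((1:ZMod p), ((m:ZMod q), (0:ZMod q))).2) - f₂))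
      = (w 1 1 : k) := by
    rw [Finset.sum_eq_single (((1:ZMod q), (0:ZMod q)))]
    · rw [Finset.sum_eq_single (((m:ZMod q), (0:ZMod q)))]
      · simp [hΔopA, hΔA, hR, hval1, hσ0, hσ0']
      · intro f2 _ hf2
        simp only [hΔopA, hΔA, hval1, pow_one]
        rw [if_neg (by tauto)]
        ring
      · intro habs; exact absurd (Finset.mem_univ _) habs
    · intro f1 _ hf1
      apply Finset.sum_eq_zero
      intro f2 _
      simp only [hΔopA, hΔA, hval1, pow_one]
      rw [if_neg (by tauto)]
      ring
    · intro habs; exact absurd (Finset.mem_univ _) habs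
  have hRhs : (∑ f₁ : ZMod q × ZMod q, ∑ f₂ : ZMod q × ZMod q,
      R ((((1:ZMod p), ((1:ZMod q), (0:ZMod q))).1, f₁), (((1:ZMod p), ((m:ZMod q), (0:ZMod q))).1, f₂)) *
        ΔA ((((1:ZMod p), ((1:ZMod q), (0:ZMod q))).1, (((1:ZMod p), ((1:ZMod q), (0:ZMod q))).2) - f₁),
           (((1:ZMod p), ((m:ZMod q), (0:ZMod q))).1, (((1:ZMod p), ((m:ZMod q), (0:ZMod q))).2) - f₂)) *
        σ (((1:ZMod p), ((1:ZMod q), (0:ZMod q))).1) f₁ ((((1:ZMod p), ((1:ZMod q), (0:ZMod q))).2) - f₁) *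
        σ (((1:ZMod p), ((m:ZMod q), (0:ZMod q))).1) f₂ ((((1:ZMod p), ((m:ZMod q), (0:ZMod q))).2) - f₂)) = 0 := by
    apply Finset.sum_eq_zero
    intro f1 _
    apply Finset.sum_eq_zero
    intro f2 _
    simp only [hR, hΔA, hval1, pow_one]
    by_cases h1 : f1 = 0 ∧ f2 = 0
    · obtain ⟨h1a, h1b⟩ := h1
      subst h1a; subst h1b
      have hne : ((1:ZMod q), (0:ZMod q)) ≠ ((m:ZMod q), 0) := by
        simp [Prod.ext_iff, hmq.symm]
      simp [hne]
    · rw [if_neg h1]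
      ring
  rw [hL, hRhs] at key
  exact Units.ne_zero (w 1 1) key
end
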